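/- Define H(z) = -(√z/4)·Σ_{n=0}^∞ (zⁿ/n!)·Γ(n - 1/2)/Γ(n + 3/2) for z > 0. Then H(z)/(z^{-3/2}·e^{z}) → -1/4 as z → ∞. -/

import Mathlib

/-!
Since `Γ(n - 1/2) / Γ(n + 3/2) = 1 / ((n - 1/2)(n + 1/2))`, multiplying the series by `z²` and
shifting the index by two turns it into `∑ cₘ zᵐ/m!` with `cₘ = m(m-1) / ((m-5/2)(m-3/2)) → 1`.
The Borel mean `e^{-z} ∑ aₙ zⁿ/n!` of a convergent sequence tends to its limit, because the
Poisson weights `e^{-z} zⁿ/n!` sum to one and put vanishing mass on any fixed finite set of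
indices. Hence `z² e^{-z} ∑ ... → 1`, and `√z · z^{3/2} = z²` gives the limit `-1/4`.
-/

open Real Filter

noncomputable def Hfun (z : ℝ) : ℝ :=
  -(Real.sqrt z / 4) *
    ∑' n : ℕ, z ^ n / (Nat.factorial n) *
      (Real.Gamma ((n : ℝ) - 1 / 2) / Real.Gamma ((n : ℝ) + 3 / 2))

open scoped Nat Topology

noncomputable def borelMean (a : ℕ → ℝ) (z : ℝ) : ℝ :=
  exp (-z) * ∑' n, a n * z ^ n / n !

lemma hasSum_pow_div_factorial (z : ℝ) : HasSum (fun n => z ^ n / n !) (exp z) := by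
  rw [exp_eq_exp_ℝ]
  exact NormedSpace.expSeries_div_hasSum_exp z

lemma summable_mul_pow_div_factorial {a : ℕ → ℝ} {C : ℝ} (hC : ∀ n, |a n| ≤ C) (z : ℝ) :
    Summable fun n => a n * z ^ n / n ! := by
  refine .of_norm_bounded ((summable_pow_div_factorial |z|).mul_left C) fun n => ?_
  rw [norm_div, norm_mul, norm_pow, Real.norm_eq_abs, Real.norm_eq_abs, Real.norm_natCast,
    mul_div_assoc]
  gcongr
  exact hC n

lemma exists_abs_le_of_tendsto {a : ℕ → ℝ} {L : ℝ} (ha : Tendsto a atTop (𝓝 L)) :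
    ∃ C, ∀ n, |a n| ≤ C := by
  obtain ⟨C, hC⟩ := ha.abs.bddAbove_range
  exact ⟨C, fun n => hC ⟨n, rfl⟩⟩

lemma borelMean_sub_const {a : ℕ → ℝ} {C : ℝ} (hC : ∀ n, |a n| ≤ C) (L z : ℝ) :
    borelMean (fun n => a n - L) z = borelMean a z - L := by
  have hL : HasSum (fun n => L * z ^ n / n !) (L * exp z) := by
    simpa only [mul_div_assoc] using (hasSum_pow_div_factorial z).mul_left L
  simp only [borelMean, sub_mul, sub_div]
  rw [(summable_mul_pow_div_factorial hC z).tsum_sub hL.summable, hL.tsum_eq, mul_sub,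
    mul_left_comm, ← exp_add, neg_add_cancel, exp_zero, mul_one]

lemma abs_borelMean_le {a : ℕ → ℝ} {C ε z : ℝ} {N : ℕ} (hC : ∀ n, |a n| ≤ C)
    (hN : ∀ n ≥ N, |a n| ≤ ε) (hz : 0 ≤ z) :
    |borelMean a z| ≤ exp (-z) * ∑ n ∈ Finset.range N, |a n| * z ^ n / n ! + ε := by
  have habs : Summable fun n => |a n| * z ^ n / n ! :=
    summable_mul_pow_div_factorial (C := C) (by simpa using hC) z
  have hnorm : ∀ n, ‖a n * z ^ n / (n ! : ℝ)‖ = |a n| * z ^ n / n ! := fun n => by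
    rw [Real.norm_eq_abs, abs_div, abs_mul, abs_pow, abs_of_nonneg hz, Nat.abs_cast]
  have htail : ∑' n, |a (n + N)| * z ^ (n + N) / (n + N)! ≤ ε * exp z := by
    have hexp := hasSum_pow_div_factorial z
    calc ∑' n, |a (n + N)| * z ^ (n + N) / (n + N)!
        ≤ ∑' n, ε * (z ^ (n + N) / (n + N)!) := by
          refine ((summable_nat_add_iff N).mpr habs).tsum_le_tsum (fun n => ?_)
            (((summable_nat_add_iff N).mpr hexp.summable).mul_left ε)
          rw [mul_div_assoc]
          gcongr
          exact hN _ (Nat.le_add_left N n)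
      _ = ε * ∑' n, z ^ (n + N) / (n + N)! := tsum_mul_left
      _ ≤ ε * exp z := by
          gcongr
          · exact (abs_nonneg _).trans (hN N le_rfl)
          · rw [← hexp.tsum_eq]
            exact tsum_comp_le_tsum_of_inj hexp.summable (fun n => by positivity)
              (add_left_injective N)
  have hsum : |∑' n, a n * z ^ n / n !| ≤ ∑ n ∈ Finset.range N, |a n| * z ^ n / n ! + ε * exp z :=
    calc |∑' n, a n * z ^ n / n !| ≤ ∑' n, |a n| * z ^ n / n ! := by
          rw [← Real.norm_eq_abs]
          simpa only [hnorm] using norm_tsum_le_tsum_norm (f := fun n => a n * z ^ n / n !) (by simpa only [hnorm])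
      _ = ∑ n ∈ Finset.range N, |a n| * z ^ n / n ! +
            ∑' n, |a (n + N)| * z ^ (n + N) / (n + N)! := (habs.sum_add_tsum_nat_add N).symm
      _ ≤ _ := by gcongr
  calc |borelMean a z| = exp (-z) * |∑' n, a n * z ^ n / n !| := by
        rw [borelMean, abs_mul, abs_of_pos (exp_pos _)]
    _ ≤ exp (-z) * (∑ n ∈ Finset.range N, |a n| * z ^ n / n ! + ε * exp z) := by gcongr
    _ = _ := by rw [mul_add, mul_left_comm, ← exp_add, neg_add_cancel, exp_zero, mul_one]

lemma tendsto_borelMean_zero {a : ℕ → ℝ} (ha : Tendsto a atTop (𝓝 0)) :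
    Tendsto (borelMean a) atTop (𝓝 0) := by
  obtain ⟨C, hC⟩ := exists_abs_le_of_tendsto ha
  refine Metric.tendsto_nhds.mpr fun ε hε => ?_
  obtain ⟨N, hN⟩ : ∃ N, ∀ n ≥ N, |a n| ≤ ε / 2 := by
    simpa using eventually_atTop.mp (ha.eventually (Metric.closedBall_mem_nhds 0 (half_pos hε)))
  have hhead : Tendsto (fun z => exp (-z) * ∑ n ∈ Finset.range N, |a n| * z ^ n / n !)
      atTop (𝓝 0) := by
    simp_rw [Finset.mul_sum]
    rw [← Finset.sum_const_zero (s := Finset.range N)]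
    refine tendsto_finsetSum _ fun n _ => ?_
    simpa using ((tendsto_pow_mul_exp_neg_atTop_nhds_zero n).const_mul (|a n| / n !)).congr
      fun z => by ring
  filter_upwards [hhead.eventually (gt_mem_nhds (half_pos hε)), eventually_ge_atTop 0]
    with z hhead_lt hz
  rw [Real.dist_0_eq_abs]
  linarith [abs_borelMean_le hC hN hz]

theorem tendsto_borelMean {a : ℕ → ℝ} {L : ℝ} (ha : Tendsto a atTop (𝓝 L)) :
    Tendsto (borelMean a) atTop (𝓝 L) := by
  obtain ⟨C, hC⟩ := exists_abs_le_of_tendsto ha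
  have h := tendsto_borelMean_zero (a := fun n => a n - L) (by simpa using ha.sub_const L)
  simpa using (h.congr fun z => borelMean_sub_const hC L z).add_const L

lemma Real.Gamma_div_Gamma_add_two {s : ℝ} (hs : ∀ m : ℕ, s ≠ -m) :
    Gamma s / Gamma (s + 2) = (s * (s + 1))⁻¹ := by
  have h₀ : s ≠ 0 := by simpa using hs 0
  have h₁ : s + 1 ≠ 0 := fun h => hs 1 (by push_cast; linarith)
  rw [show s + 2 = s + 1 + 1 by ring, Gamma_add_one h₁, Gamma_add_one h₀, ← mul_assoc,
    div_mul_cancel_right₀ (Gamma_ne_zero hs), mul_comm]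

lemma natCast_sub_half_ne_neg_natCast (n m : ℕ) : (n : ℝ) - 1 / 2 ≠ -m := fun h => by
  have : ((2 * (n + m) : ℕ) : ℝ) = 1 := by push_cast; linarith
  norm_cast at this
  omega

lemma Gamma_sub_half_div_Gamma_add_three_halves (n : ℕ) :
    Gamma ((n : ℝ) - 1 / 2) / Gamma ((n : ℝ) + 3 / 2) = (((n : ℝ) - 1 / 2) * (n + 1 / 2))⁻¹ := by
  convert Real.Gamma_div_Gamma_add_two (natCast_sub_half_ne_neg_natCast n) using 3 <;> ring

/-- The coefficients of `z² ∑ₙ (zⁿ/n!) Γ(n - 1/2)/Γ(n + 3/2)` in the series `∑ₘ cₘ zᵐ/m!`;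
they vanish at `m = 0, 1`, so the shift `m = n + 2` loses no terms. -/
noncomputable def Hcoeff (m : ℕ) : ℝ := m * (m - 1) / ((m - 5 / 2) * (m - 3 / 2))

lemma tendsto_Hcoeff : Tendsto Hcoeff atTop (𝓝 1) := by
  have h₁ := tendsto_natCast_div_add_atTop (-5 / 2 : ℝ)
  have h₂ : Tendsto (fun m : ℕ => ((m : ℝ) - 1) / (m - 3 / 2)) atTop (𝓝 1) := by
    refine (tendsto_add_atTop_iff_nat 1).mp ((tendsto_natCast_div_add_atTop (-1 / 2 : ℝ)).congr
      fun n => ?_)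
    push_cast
    ring_nf
  rw [← mul_one 1]
  refine (h₁.mul h₂).congr fun m => ?_
  rw [Hcoeff, mul_div_mul_comm]
  ring

lemma sq_mul_tsum_eq_tsum_Hcoeff (z : ℝ) :
    z ^ 2 * ∑' n : ℕ, z ^ n / n ! * (Gamma ((n : ℝ) - 1 / 2) / Gamma ((n : ℝ) + 3 / 2)) =
      ∑' m, Hcoeff m * z ^ m / m ! := by
  rw [← tsum_mul_left, ← (add_left_injective 2).tsum_eq (f := fun m => Hcoeff m * z ^ m / m !)]
  · refine tsum_congr fun n => ?_
    rw [Gamma_sub_half_div_Gamma_add_three_halves, Hcoeff, Nat.factorial_succ, Nat.factorial_succ]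
    have : (n : ℝ) - 1 / 2 ≠ 0 := by simpa using natCast_sub_half_ne_neg_natCast n 0
    push_cast
    rw [show (n : ℝ) + 2 - 5 / 2 = n - 1 / 2 by ring, show (n : ℝ) + 2 - 3 / 2 = n + 1 / 2 by ring]
    field_simp
    ring
  · intro m hm
    obtain _ | _ | k := m
    · simp [Hcoeff] at hm
    · simp [Hcoeff] at hm
    · exact ⟨k, rfl⟩

lemma Hfun_div_eq_borelMean {z : ℝ} (hz : 0 < z) :
    Hfun z / (z ^ (-(3:ℝ)/2) * exp z) = -1 / 4 * borelMean Hcoeff z := by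
  have hsqrt : z ^ ((3:ℝ)/2) * √z = z ^ 2 := by
    rw [sqrt_eq_rpow, ← rpow_add hz]
    norm_num
  rw [Hfun, borelMean, ← sq_mul_tsum_eq_tsum_Hcoeff, ← hsqrt, neg_div, rpow_neg hz.le, exp_neg]
  field_simp
  ring_nf

theorem Hfun_asymptotic :
    Tendsto (fun z => Hfun z / (z ^ (-(3:ℝ)/2) * Real.exp z)) atTop (nhds (-1/4)) := by
  have h := (tendsto_borelMean tendsto_Hcoeff).const_mul (-1 / 4)
  rw [mul_one] at h
  refine h.congr' ?_
  filter_upwards [eventually_gt_atTop 0] with z hz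
  exact (Hfun_div_eq_borelMean hz).symm
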